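/- arXiv:math/0202067 — 2 statements merged into one kernel-verified Lean document; each statement's English description precedes it below -/
import Mathlib

section
/- Let a, b₁, ..., b₆ be integers satisfying 3a - (b₁ + ... + b₆) = 3 and a² - (b₁² + ... + b₆²) = 1, with all solutions required to satisfy (b₁+...+b₆)² ≤ 6(b₁²+...+b₆²). Then a ∈ {1, 2, 3, 4, 5}, and up to permutation of (b₁,...,b₆) the solutions are exactly (1,0,0,0,0,0,0), (2,1,1,1,0,0,0), (3,2,1,1,1,1,0), (4,2,2,2,1,1,1), (5,2,2,2,2,2,2). The total number of solutions (counting permutations) is 72. -/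
open Finset

/-- Auxiliary finset of `b`-tuples with entries in `s`, given coordinate sum and sum of squares. -/
def cubicAuxT (s : Finset ℤ) (su sq : ℤ) : Finset (Fin 6 → ℤ) :=
  (Fintype.piFinset fun _ => s).filter
  fun b => b 0 + b 1 + b 2 + b 3 + b 4 + b 5 = su ∧
    b 0 * b 0 + b 1 * b 1 + b 2 * b 2 + b 3 * b 3 + b 4 * b 4 + b 5 * b 5 = sq

/-- The explicit finset of all 72 solutions. -/
def cubicSols : Finset (ℤ × (Fin 6 → ℤ)) :=
  (cubicAuxT {0} 0 0).image (Prod.mk 1) ∪ (cubicAuxT {0,1} 3 3).image (Prod.mk 2) ∪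
  (cubicAuxT {0,1,2} 6 8).image (Prod.mk 3) ∪ (cubicAuxT {1,2} 9 15).image (Prod.mk 4) ∪
  (cubicAuxT {2} 12 24).image (Prod.mk 5)

set_option maxRecDepth 400000 in
lemma cubicSols_card : cubicSols.card = 72 := by decide

/-- Sorted solution for a = 2. -/
lemma cubic_sorted2 (c : Fin 6 → ℤ) (hm : Monotone c) (hr : ∀ i, 0 ≤ c i ∧ c i ≤ 1)
    (hs : ∑ i, c i = 3) (hq : ∑ i, (c i)^2 = 3) : c = ![0, 0, 0, 1, 1, 1] := by
  simp only [Fin.sum_univ_six] at hs hq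
  have f : ∀ i : Fin 6, (c i = 0 ∧ (c i)^2 = 0) ∨ (c i = 1 ∧ (c i)^2 = 1) := by
    intro i
    obtain ⟨h0, h1⟩ := hr i
    have : c i = 0 ∨ c i = 1 := by omega
    rcases this with h | h <;> rw [h] <;> norm_num
  have m01 := hm (show (0:Fin 6) ≤ 1 by decide)
  have m12 := hm (show (1:Fin 6) ≤ 2 by decide)
  have m23 := hm (show (2:Fin 6) ≤ 3 by decide)
  have m34 := hm (show (3:Fin 6) ≤ 4 by decide)
  have m45 := hm (show (4:Fin 6) ≤ 5 by decide)
  have g0 := f 0; have g1 := f 1; have g2 := f 2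
  have g3 := f 3; have g4 := f 4; have g5 := f 5
  have hv : c 0 = 0 ∧ c 1 = 0 ∧ c 2 = 0 ∧ c 3 = 1 ∧ c 4 = 1 ∧ c 5 = 1 := by omega
  funext i
  fin_cases i
  · exact hv.1
  · exact hv.2.1
  · exact hv.2.2.1
  · exact hv.2.2.2.1
  · exact hv.2.2.2.2.1
  · exact hv.2.2.2.2.2

/-- Sorted solution for a = 3. -/
lemma cubic_sorted3 (c : Fin 6 → ℤ) (hm : Monotone c) (hr : ∀ i, 0 ≤ c i ∧ c i ≤ 2)
    (hs : ∑ i, c i = 6) (hq : ∑ i, (c i)^2 = 8) : c = ![0, 1, 1, 1, 1, 2] := by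
  simp only [Fin.sum_univ_six] at hs hq
  have f : ∀ i : Fin 6, (c i = 0 ∧ (c i)^2 = 0) ∨ (c i = 1 ∧ (c i)^2 = 1) ∨
      (c i = 2 ∧ (c i)^2 = 4) := by
    intro i
    obtain ⟨h0, h1⟩ := hr i
    have : c i = 0 ∨ c i = 1 ∨ c i = 2 := by omega
    rcases this with h | h | h <;> rw [h] <;> norm_num
  have m01 := hm (show (0:Fin 6) ≤ 1 by decide)
  have m12 := hm (show (1:Fin 6) ≤ 2 by decide)
  have m23 := hm (show (2:Fin 6) ≤ 3 by decide)
  have m34 := hm (show (3:Fin 6) ≤ 4 by decide)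
  have m45 := hm (show (4:Fin 6) ≤ 5 by decide)
  have g0 := f 0; have g1 := f 1; have g2 := f 2
  have g3 := f 3; have g4 := f 4; have g5 := f 5
  have hv : c 0 = 0 ∧ c 1 = 1 ∧ c 2 = 1 ∧ c 3 = 1 ∧ c 4 = 1 ∧ c 5 = 2 := by omega
  funext i
  fin_cases i
  · exact hv.1
  · exact hv.2.1
  · exact hv.2.2.1
  · exact hv.2.2.2.1
  · exact hv.2.2.2.2.1
  · exact hv.2.2.2.2.2

/-- Sorted solution for a = 4. -/
lemma cubic_sorted4 (c : Fin 6 → ℤ) (hm : Monotone c) (hr : ∀ i, 1 ≤ c i ∧ c i ≤ 2)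
    (hs : ∑ i, c i = 9) (hq : ∑ i, (c i)^2 = 15) : c = ![1, 1, 1, 2, 2, 2] := by
  simp only [Fin.sum_univ_six] at hs hq
  have f : ∀ i : Fin 6, (c i = 1 ∧ (c i)^2 = 1) ∨ (c i = 2 ∧ (c i)^2 = 4) := by
    intro i
    obtain ⟨h0, h1⟩ := hr i
    have : c i = 1 ∨ c i = 2 := by omega
    rcases this with h | h <;> rw [h] <;> norm_num
  have m01 := hm (show (0:Fin 6) ≤ 1 by decide)
  have m12 := hm (show (1:Fin 6) ≤ 2 by decide)
  have m23 := hm (show (2:Fin 6) ≤ 3 by decide)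
  have m34 := hm (show (3:Fin 6) ≤ 4 by decide)
  have m45 := hm (show (4:Fin 6) ≤ 5 by decide)
  have g0 := f 0; have g1 := f 1; have g2 := f 2
  have g3 := f 3; have g4 := f 4; have g5 := f 5
  have hv : c 0 = 1 ∧ c 1 = 1 ∧ c 2 = 1 ∧ c 3 = 2 ∧ c 4 = 2 ∧ c 5 = 2 := by omega
  funext i
  fin_cases i
  · exact hv.1
  · exact hv.2.1
  · exact hv.2.2.1
  · exact hv.2.2.2.1
  · exact hv.2.2.2.2.1
  · exact hv.2.2.2.2.2

/-- The classification part. -/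
lemma cubic_classify (a : ℤ) (b : Fin 6 → ℤ)
    (h1 : 3 * a - ∑ i, b i = 3) (h2 : a ^ 2 - ∑ i, (b i) ^ 2 = 1) :
    (a = 1 ∨ a = 2 ∨ a = 3 ∨ a = 4 ∨ a = 5) ∧
    ∃ σ : Equiv.Perm (Fin 6),
      (a = 1 ∧ b ∘ σ = ![0, 0, 0, 0, 0, 0]) ∨
      (a = 2 ∧ b ∘ σ = ![1, 1, 1, 0, 0, 0]) ∨
      (a = 3 ∧ b ∘ σ = ![2, 1, 1, 1, 1, 0]) ∨
      (a = 4 ∧ b ∘ σ = ![2, 2, 2, 1, 1, 1]) ∨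
      (a = 5 ∧ b ∘ σ = ![2, 2, 2, 2, 2, 2]) := by
  have key : ∑ i, (2 * b i - (a - 1))^2 = 2 * (a - 1) * (5 - a) := by
    simp only [Fin.sum_univ_six] at h1 h2 ⊢
    linear_combination (4*a - 4) * h1 - 4 * h2
  have hnn : (0:ℤ) ≤ 2 * (a - 1) * (5 - a) := by
    rw [← key]; exact Finset.sum_nonneg fun i _ => sq_nonneg _
  have hble : ∀ i, (2 * b i - (a - 1))^2 ≤ 2 * (a - 1) * (5 - a) := by
    intro i
    rw [← key]
    exact Finset.single_le_sum (f := fun j => (2 * b j - (a - 1))^2) (fun j _ => sq_nonneg _) (mem_univ i)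
  have ha1 : 1 ≤ a := by nlinarith
  have ha5 : a ≤ 5 := by nlinarith
  have hb8 : ∀ i, (2 * b i - (a - 1))^2 ≤ 8 := by
    intro i
    have := hble i
    nlinarith [sq_nonneg (a - 3)]
  have hbd : ∀ i, a - 3 ≤ 2 * b i ∧ 2 * b i ≤ a + 1 := by
    intro i
    have h := hb8 i
    have hu : 6 * (2 * b i - (a - 1)) ≤ 17 := by nlinarith
    have hl : -17 ≤ 6 * (2 * b i - (a - 1)) := by nlinarith
    omega
  -- sorting setup
  set σ₀ := Tuple.sort b with hσ₀
  have hmono : Monotone (b ∘ ⇑σ₀) := Tuple.monotone_sort b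
  have hsum : ∑ i, (b ∘ ⇑σ₀) i = ∑ i, b i := Equiv.sum_comp σ₀ b
  have hsq : ∑ i, ((b ∘ ⇑σ₀) i)^2 = ∑ i, (b i)^2 := Equiv.sum_comp σ₀ (fun x => (b x)^2)
  interval_cases a
  · -- a = 1 : all bᵢ = 0
    have hz : ∀ i, b i = 0 := by
      intro i
      have h := hble i
      nlinarith
    refine ⟨Or.inl rfl, 1, Or.inl ⟨rfl, ?_⟩⟩
    funext i
    simp only [Equiv.Perm.coe_one, Function.comp_apply, id_eq]
    have := hz i
    fin_cases i <;> simpa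
  · -- a = 2
    have hc := cubic_sorted2 (b ∘ ⇑σ₀) hmono
      (fun i => by have := hbd (σ₀ i); simp only [Function.comp_apply]; omega)
      (by rw [hsum]; omega) (by rw [hsq]; omega)
    refine ⟨Or.inr (Or.inl rfl), Fin.revPerm.trans σ₀, Or.inr (Or.inl ⟨rfl, ?_⟩)⟩
    funext i
    show (b ∘ ⇑σ₀) (Fin.rev i) = _
    rw [hc]
    fin_cases i <;> rfl
  · -- a = 3
    have hc := cubic_sorted3 (b ∘ ⇑σ₀) hmono
      (fun i => by have := hbd (σ₀ i); simp only [Function.comp_apply]; omega)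
      (by rw [hsum]; omega) (by rw [hsq]; omega)
    refine ⟨Or.inr (Or.inr (Or.inl rfl)), Fin.revPerm.trans σ₀,
      Or.inr (Or.inr (Or.inl ⟨rfl, ?_⟩))⟩
    funext i
    show (b ∘ ⇑σ₀) (Fin.rev i) = _
    rw [hc]
    fin_cases i <;> rfl
  · -- a = 4
    have hc := cubic_sorted4 (b ∘ ⇑σ₀) hmono
      (fun i => by have := hbd (σ₀ i); simp only [Function.comp_apply]; omega)
      (by rw [hsum]; omega) (by rw [hsq]; omega)
    refine ⟨Or.inr (Or.inr (Or.inr (Or.inl rfl))), Fin.revPerm.trans σ₀,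
      Or.inr (Or.inr (Or.inr (Or.inl ⟨rfl, ?_⟩)))⟩
    funext i
    show (b ∘ ⇑σ₀) (Fin.rev i) = _
    rw [hc]
    fin_cases i <;> rfl
  · -- a = 5 : all bᵢ = 2
    have hz : ∀ i, b i = 2 := by
      intro i
      have h := hble i
      nlinarith
    refine ⟨Or.inr (Or.inr (Or.inr (Or.inr rfl))), 1,
      Or.inr (Or.inr (Or.inr (Or.inr ⟨rfl, ?_⟩)))⟩
    funext i
    simp only [Equiv.Perm.coe_one, Function.comp_apply, id_eq]
    have := hz i
    fin_cases i <;> simpa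

lemma cubic_mem_aux {s : Finset ℤ} {su sq : ℤ} {b : Fin 6 → ℤ}
    (hv : ∀ i, b i ∈ s) (hsu : b 0 + b 1 + b 2 + b 3 + b 4 + b 5 = su)
    (hsq : b 0 * b 0 + b 1 * b 1 + b 2 * b 2 + b 3 * b 3 + b 4 * b 4 + b 5 * b 5 = sq) :
    b ∈ cubicAuxT s su sq :=
  Finset.mem_filter.2 ⟨Fintype.mem_piFinset.2 hv, hsu, hsq⟩

lemma cubic_val_aux {b t : Fin 6 → ℤ} {σ : Equiv.Perm (Fin 6)} (h : b ∘ ⇑σ = t) (i : Fin 6) :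
    b i = t (σ.symm i) := by
  have := congrFun h (σ.symm i)
  simpa using this

/-- Classification of line bundles `L = a·l - Σ bᵢeᵢ` on a smooth cubic surface with
`L² = a² - Σbᵢ² = 1` and `L·K_S = -3`, i.e. `3a - Σbᵢ = 3`: the possible `a` are
`1,…,5`, up to permutation of the `bᵢ` the solutions are the five listed tuples,
and the total number of solutions is `72`. -/
theorem cubic_surface_degree_three_selfint_one_classes :
    (∀ (a : ℤ) (b : Fin 6 → ℤ),
      3 * a - ∑ i, b i = 3 → a ^ 2 - ∑ i, (b i) ^ 2 = 1 →
      (a = 1 ∨ a = 2 ∨ a = 3 ∨ a = 4 ∨ a = 5) ∧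
      ∃ σ : Equiv.Perm (Fin 6),
        (a = 1 ∧ b ∘ σ = ![0, 0, 0, 0, 0, 0]) ∨
        (a = 2 ∧ b ∘ σ = ![1, 1, 1, 0, 0, 0]) ∨
        (a = 3 ∧ b ∘ σ = ![2, 1, 1, 1, 1, 0]) ∨
        (a = 4 ∧ b ∘ σ = ![2, 2, 2, 1, 1, 1]) ∨
        (a = 5 ∧ b ∘ σ = ![2, 2, 2, 2, 2, 2])) ∧
    {p : ℤ × (Fin 6 → ℤ) |
      3 * p.1 - ∑ i, p.2 i = 3 ∧ p.1 ^ 2 - ∑ i, (p.2 i) ^ 2 = 1}.ncard = 72 := by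
  refine ⟨fun a b h1 h2 => cubic_classify a b h1 h2, ?_⟩
  have hset : {p : ℤ × (Fin 6 → ℤ) |
      3 * p.1 - ∑ i, p.2 i = 3 ∧ p.1 ^ 2 - ∑ i, (p.2 i) ^ 2 = 1} = ↑cubicSols := by
    ext ⟨a, b⟩
    simp only [Set.mem_setOf_eq, Finset.coe_sort_coe, Finset.mem_coe]
    constructor
    · rintro ⟨h1, h2⟩
      obtain ⟨_, σ, hcase⟩ := cubic_classify a b h1 h2
      simp only [Fin.sum_univ_six] at h1 h2
      rcases hcase with ⟨rfl, hb⟩ | ⟨rfl, hb⟩ | ⟨rfl, hb⟩ | ⟨rfl, hb⟩ | ⟨rfl, hb⟩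
      · refine mem_union_left _ (mem_union_left _ (mem_union_left _ (mem_union_left _
          (Finset.mem_image_of_mem _ (cubic_mem_aux ?_ (by omega) (by linear_combination -h2)))))) 
        intro i
        rw [cubic_val_aux hb]
        have : ∀ j : Fin 6, (![0,0,0,0,0,0] : Fin 6 → ℤ) j ∈ ({0} : Finset ℤ) := by decide
        exact this _
      · refine mem_union_left _ (mem_union_left _ (mem_union_left _ (mem_union_right _
          (Finset.mem_image_of_mem _ (cubic_mem_aux ?_ (by omega) (by linear_combination -h2))))))
        intro i
        rw [cubic_val_aux hb]
        have : ∀ j : Fin 6, (![1,1,1,0,0,0] : Fin 6 → ℤ) j ∈ ({0,1} : Finset ℤ) := by decide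
        exact this _
      · refine mem_union_left _ (mem_union_left _ (mem_union_right _
          (Finset.mem_image_of_mem _ (cubic_mem_aux ?_ (by omega) (by linear_combination -h2)))))
        intro i
        rw [cubic_val_aux hb]
        have : ∀ j : Fin 6, (![2,1,1,1,1,0] : Fin 6 → ℤ) j ∈ ({0,1,2} : Finset ℤ) := by decide
        exact this _
      · refine mem_union_left _ (mem_union_right _
          (Finset.mem_image_of_mem _ (cubic_mem_aux ?_ (by omega) (by linear_combination -h2))))
        intro i
        rw [cubic_val_aux hb]
        have : ∀ j : Fin 6, (![2,2,2,1,1,1] : Fin 6 → ℤ) j ∈ ({1,2} : Finset ℤ) := by decide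
        exact this _
      · refine mem_union_right _
          (Finset.mem_image_of_mem _ (cubic_mem_aux ?_ (by omega) (by linear_combination -h2)))
        intro i
        rw [cubic_val_aux hb]
        have : ∀ j : Fin 6, (![2,2,2,2,2,2] : Fin 6 → ℤ) j ∈ ({2} : Finset ℤ) := by decide
        exact this _
    · intro hmem
      simp only [cubicSols, cubicAuxT, Finset.mem_union, Finset.mem_image,
        Finset.mem_filter, Fintype.mem_piFinset, Prod.mk.injEq] at hmem
      simp only [Fin.sum_univ_six]
      rcases hmem with (((⟨b', ⟨_, e1, e2⟩, ha, hb⟩ | ⟨b', ⟨_, e1, e2⟩, ha, hb⟩) |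
          ⟨b', ⟨_, e1, e2⟩, ha, hb⟩) | ⟨b', ⟨_, e1, e2⟩, ha, hb⟩) |
          ⟨b', ⟨_, e1, e2⟩, ha, hb⟩ <;>
        subst ha <;> subst hb <;>
        exact ⟨by omega, by linear_combination -e2⟩
  rw [hset, Set.ncard_coe_finset]
  exact cubicSols_card
end

section
/- Let C ≅ P¹ ⊂ Pⁿ be a rational normal curve of degree n, and let P ⊂ Pⁿ be a linear subspace of dimension r. If (r+2)k ≥ (r+1)(n+1), then there exists an effective divisor D = q₁ + ... + q_k of degree k on C such that P ⊆ span(D). -/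
open MvPolynomial

/-- The binary form of degree `n` obtained by restricting a linear functional `φ` on
`ℂⁿ⁺¹` to the rational normal curve `[s : t] ↦ [sⁿ : sⁿ⁻¹t : ⋯ : tⁿ]`. -/
noncomputable def restrictForm (n : ℕ) (φ : Module.Dual ℂ (Fin (n + 1) → ℂ)) :
    MvPolynomial (Fin 2) ℂ :=
  ∑ i : Fin (n + 1), C (φ (Pi.single i 1)) * (X 0 ^ (n - (i : ℕ)) * X 1 ^ (i : ℕ))

/-- The linear binary form vanishing at the point `[q 0 : q 1] ∈ ℙ¹`. -/
noncomputable def chordFactor (q : Fin 2 → ℂ) : MvPolynomial (Fin 2) ℂ :=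
  C (q 1) * X 0 - C (q 0) * X 1

/-! Auxiliary machinery -/

noncomputable def mono2 (a b : ℕ) : Fin 2 →₀ ℕ := Finsupp.single 0 a + Finsupp.single 1 b

lemma mono2_apply0 (a b : ℕ) : mono2 a b 0 = a := by
  simp [mono2, Finsupp.single_apply]

lemma mono2_apply1 (a b : ℕ) : mono2 a b 1 = b := by
  simp [mono2, Finsupp.single_apply]

lemma degree_fin2 (d : Fin 2 →₀ ℕ) : d.degree = d 0 + d 1 := by
  rw [Finsupp.degree, ← Fin.sum_univ_two (f := fun i => d i)]
  exact Finset.sum_subset (Finset.subset_univ _)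
    (fun i _ hi => Finsupp.notMem_support_iff.mp hi)

lemma degree_mono2 (a b : ℕ) : (mono2 a b).degree = a + b := by
  rw [degree_fin2, mono2_apply0, mono2_apply1]

lemma eq_mono2 (μ : Fin 2 →₀ ℕ) : μ = mono2 (μ 0) (μ 1) := by
  ext j
  fin_cases j
  · simp [mono2_apply0]
  · simp [mono2_apply1]

lemma X_pow_mul_X_pow (a b : ℕ) :
    (X 0 ^ a * X 1 ^ b : MvPolynomial (Fin 2) ℂ) = monomial (mono2 a b) 1 := by
  rw [X_pow_eq_monomial, X_pow_eq_monomial, monomial_mul, one_mul]; rfl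

noncomputable def Lf (n : ℕ) (v : Fin (n + 1) → ℂ) (F : MvPolynomial (Fin 2) ℂ) : ℂ :=
  ∑ i : Fin (n + 1), v i * MvPolynomial.coeff (mono2 (n - (i : ℕ)) (i : ℕ)) F

lemma Lf_add (n : ℕ) (v : Fin (n + 1) → ℂ) (F G : MvPolynomial (Fin 2) ℂ) :
    Lf n v (F + G) = Lf n v F + Lf n v G := by
  simp [Lf, MvPolynomial.coeff_add, mul_add, Finset.sum_add_distrib]

lemma Lf_smul (n : ℕ) (v : Fin (n + 1) → ℂ) (c : ℂ) (F : MvPolynomial (Fin 2) ℂ) :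
    Lf n v (c • F) = c * Lf n v F := by
  simp [Lf, MvPolynomial.coeff_smul, Finset.mul_sum, mul_left_comm]

lemma Lf_sum (n : ℕ) (v : Fin (n + 1) → ℂ) {ι : Type*} (s : Finset ι)
    (F : ι → MvPolynomial (Fin 2) ℂ) :
    Lf n v (∑ x ∈ s, F x) = ∑ x ∈ s, Lf n v (F x) := by
  simp only [Lf, MvPolynomial.coeff_sum, Finset.mul_sum]
  rw [Finset.sum_comm]

lemma Lf_homog (n : ℕ) (v : Fin (n + 1) → ℂ) {F : MvPolynomial (Fin 2) ℂ} {D : ℕ}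
    (hF : F.IsHomogeneous D) (hD : D ≠ n) : Lf n v F = 0 := by
  refine Finset.sum_eq_zero fun i _ => ?_
  rw [hF.coeff_eq_zero, mul_zero]
  rw [degree_mono2]
  have := i.isLt
  omega

lemma Lf_sum_smul (n : ℕ) {ι : Type*} (S : Finset ι) (c : ι → ℂ)
    (vs : ι → (Fin (n + 1) → ℂ)) (F : MvPolynomial (Fin 2) ℂ) :
    Lf n (∑ s ∈ S, c s • vs s) F = ∑ s ∈ S, c s * Lf n (vs s) F := by
  simp only [Lf, Finset.sum_apply, Pi.smul_apply, smul_eq_mul, Finset.sum_mul, Finset.mul_sum,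
    mul_assoc]
  rw [Finset.sum_comm]

lemma coeff_restrictForm (n : ℕ) (φ : Module.Dual ℂ (Fin (n + 1) → ℂ)) (i : Fin (n + 1)) :
    MvPolynomial.coeff (mono2 (n - (i : ℕ)) (i : ℕ)) (restrictForm n φ) = φ (Pi.single i 1) := by
  rw [restrictForm, MvPolynomial.coeff_sum]
  rw [Finset.sum_eq_single i]
  · rw [X_pow_mul_X_pow, C_mul_monomial, mul_one, MvPolynomial.coeff_monomial, if_pos rfl]
  · intro b _ hb
    rw [X_pow_mul_X_pow, C_mul_monomial, mul_one, MvPolynomial.coeff_monomial, if_neg]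
    intro h
    exact hb (Fin.ext (by simpa [mono2_apply1] using congrArg (fun f => f 1) h))
  · simp

lemma Lf_restrict (n : ℕ) (φ : Module.Dual ℂ (Fin (n + 1) → ℂ)) (v : Fin (n + 1) → ℂ) :
    Lf n v (restrictForm n φ) = φ v := by
  rw [Lf]
  simp only [coeff_restrictForm]
  rw [LinearMap.pi_apply_eq_sum_univ φ v]
  refine Finset.sum_congr rfl fun i _ => ?_
  rw [smul_eq_mul]
  congr 1
  congr 1
  funext j
  simp [Pi.single_apply, eq_comm]

noncomputable def Gp (k : ℕ) (a : Fin (k + 1) → ℂ) : MvPolynomial (Fin 2) ℂ :=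
  ∑ i : Fin (k + 1), C (a i) * (X 0 ^ (i : ℕ) * X 1 ^ (k - (i : ℕ)))

lemma Gp_add (k : ℕ) (a b : Fin (k + 1) → ℂ) : Gp k (a + b) = Gp k a + Gp k b := by
  simp [Gp, C_add, add_mul, Finset.sum_add_distrib]

lemma Gp_smul (k : ℕ) (c : ℂ) (a : Fin (k + 1) → ℂ) : Gp k (c • a) = c • Gp k a := by
  simp only [Gp, Finset.smul_sum, Pi.smul_apply, smul_eq_mul, C_mul, smul_mul_assoc,
    MvPolynomial.smul_eq_C_mul, mul_assoc]

noncomputable def Tmap (n r k : ℕ) (w : Fin (r + 1) → (Fin (n + 1) → ℂ)) :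
    (Fin (k + 1) → ℂ) →ₗ[ℂ] (Fin (r + 1) → Fin (n - k + 1) → ℂ) where
  toFun a s j := Lf n (w s) (Gp k a * (X 0 ^ (j : ℕ) * X 1 ^ (n - k - (j : ℕ))))
  map_add' a b := by
    funext s j
    simp only [Gp_add, add_mul, Lf_add, Pi.add_apply]
  map_smul' c a := by
    funext s j
    simp only [Gp_smul, smul_mul_assoc, Lf_smul, RingHom.id_apply, Pi.smul_apply, smul_eq_mul]

lemma chordFactor_homog (q : Fin 2 → ℂ) : (chordFactor q).IsHomogeneous 1 :=
  (MvPolynomial.isHomogeneous_C_mul_X _ _).sub (MvPolynomial.isHomogeneous_C_mul_X _ _)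

lemma prod_chord_homog (k : ℕ) (q : Fin k → (Fin 2 → ℂ)) :
    (∏ j, chordFactor (q j)).IsHomogeneous k := by
  have := MvPolynomial.IsHomogeneous.prod Finset.univ (fun j => chordFactor (q j))
    (fun _ => 1) (fun j _ => chordFactor_homog (q j))
  simpa using this

lemma eval_chord_aux (x : Fin 2 → ℂ) (z : ℂ) :
    eval x (chordFactor ![z, 1]) = x 0 - z * x 1 := by
  simp [chordFactor]

lemma eval_chord_inf (x : Fin 2 → ℂ) :
    eval x (chordFactor ![(1 : ℂ), 0]) = -(x 1) := by
  simp [chordFactor]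

lemma key_identity (k m : ℕ) (hm : m ≤ k) (p : Polynomial ℂ) (a : Fin (k + 1) → ℂ)
    (hdeg : p.natDegree = m)
    (pdef : p = ∑ i : Fin (k + 1), Polynomial.C (a i) * Polynomial.X ^ (i : ℕ))
    (pc : ∀ i : Fin (k + 1), a i = p.coeff (i : ℕ))
    (rlist : List ℂ) (hlen : rlist.length = m)
    (hfac : p = Polynomial.C p.leadingCoeff *
      (rlist.map (fun z => Polynomial.X - Polynomial.C z)).prod) :
    Gp k a = ((-1 : ℂ) ^ (k - m) * p.leadingCoeff) •
      ((rlist.map (fun z => chordFactor ![z, 1])).prod * (chordFactor ![1, 0]) ^ (k - m)) := by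
  apply MvPolynomial.funext
  intro x
  set s := x 0 with hs
  set t := x 1 with ht
  set lc := p.leadingCoeff with hlc
  have hL : eval x (Gp k a) = ∑ i : Fin (k + 1), a i * (s ^ (i : ℕ) * t ^ (k - (i : ℕ))) := by
    rw [Gp, map_sum]
    simp [hs, ht]
  have hR : eval x (((-1 : ℂ) ^ (k - m) * lc) •
      ((rlist.map (fun z => chordFactor ![z, 1])).prod * (chordFactor ![1, 0]) ^ (k - m)))
      = ((-1 : ℂ) ^ (k - m) * lc) *
        ((rlist.map (fun z => s - z * t)).prod * (-t) ^ (k - m)) := by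
    rw [MvPolynomial.smul_eq_C_mul, map_mul, eval_C, map_mul, map_pow, eval_chord_inf,
      map_list_prod, List.map_map]
    congr 2
    congr 1
    apply List.map_congr_left
    intro z _
    exact eval_chord_aux x z
  rw [hL, hR]
  by_cases ht0 : t = 0
  · -- t = 0
    rw [ht0]
    rw [Finset.sum_eq_single (⟨k, Nat.lt_succ_self k⟩ : Fin (k + 1))]
    · simp only [Nat.sub_self, pow_zero, mul_one]
      rcases eq_or_lt_of_le hm with hmk | hmk
      · -- m = k
        have hmap : rlist.map (fun z => s - z * (0 : ℂ)) = rlist.map (fun _ => s) := by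
          apply List.map_congr_left; intro z _; ring
        rw [hmap]
        have hps : (rlist.map (fun _ => s)).prod = s ^ m := by
          rw [List.map_const', List.prod_replicate, hlen]
        have hak : a ⟨k, Nat.lt_succ_self k⟩ = lc := by
          rw [pc, hlc, Polynomial.leadingCoeff, hdeg, hmk]
        rw [hps, hmk, Nat.sub_self, hak]
        norm_num
      · -- m < k
        have h1 : (-(0:ℂ)) ^ (k - m) = 0 := by
          rw [neg_zero]; exact zero_pow (by omega)
        have h2 : a ⟨k, Nat.lt_succ_self k⟩ = 0 := by
          rw [pc]
          exact Polynomial.coeff_eq_zero_of_natDegree_lt (by rw [hdeg]; exact hmk)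
        rw [h1, h2]
        ring
    · intro i _ hi
      have hik : (i : ℕ) < k := by
        have := i.isLt
        have : (i : ℕ) ≠ k := fun h => hi (Fin.ext h)
        omega
      rw [zero_pow (by omega : k - (i : ℕ) ≠ 0)]
      ring
    · simp
  · -- t ≠ 0
    have hev1 : p.eval (s / t) = ∑ i : Fin (k + 1), a i * (s / t) ^ (i : ℕ) := by
      rw [pdef, Polynomial.eval_finset_sum]
      simp
    have hev2 : p.eval (s / t) = lc * (rlist.map (fun z => s / t - z)).prod := by
      rw [hfac, Polynomial.eval_mul, Polynomial.eval_C, Polynomial.eval_list_prod, List.map_map]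
      congr 2
      apply List.map_congr_left
      intro z _
      simp
    have hLHS : ∑ i : Fin (k + 1), a i * (s ^ (i : ℕ) * t ^ (k - (i : ℕ)))
        = t ^ k * p.eval (s / t) := by
      rw [hev1, Finset.mul_sum]
      refine Finset.sum_congr rfl fun i _ => ?_
      have hik : (i : ℕ) ≤ k := Nat.lt_succ_iff.mp i.isLt
      rw [div_pow]
      rw [show t ^ k = t ^ (k - (i : ℕ)) * t ^ (i : ℕ) by rw [← pow_add]; congr 1; omega]
      field_simp
    have hmap : rlist.map (fun z => s - z * t) = rlist.map (fun z => t * (s / t - z)) := by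
      apply List.map_congr_left
      intro z _
      field_simp
    have hprod : (rlist.map (fun z => s - z * t)).prod
        = t ^ m * (rlist.map (fun z => s / t - z)).prod := by
      rw [hmap, List.prod_map_mul (f := fun _ => t) (g := fun z => s / t - z)]
      congr 1
      rw [List.map_const', List.prod_replicate, hlen]
    have hneg : (-t) ^ (k - m) = (-1 : ℂ) ^ (k - m) * t ^ (k - m) := by
      rw [neg_pow]
    rw [hLHS, hev2, hprod, hneg]
    have hsq : ((-1 : ℂ)) ^ (k - m) * ((-1 : ℂ)) ^ (k - m) = 1 := by
      rw [← pow_add]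
      exact Even.neg_one_pow ⟨k - m, by ring⟩
    have htk : t ^ m * t ^ (k - m) = t ^ k := by rw [← pow_add]; congr 1; omega
    calc t ^ k * (lc * (rlist.map (fun z => s / t - z)).prod)
        = ((-1:ℂ)^(k-m) * (-1:ℂ)^(k-m)) * (t ^ m * t ^ (k-m))
          * (lc * (rlist.map (fun z => s / t - z)).prod) := by rw [hsq, htk]; ring
      _ = (-1:ℂ)^(k-m) * lc * (t ^ m * (rlist.map (fun z => s / t - z)).prod
          * ((-1:ℂ)^(k-m) * t ^ (k-m))) := by ring


/-- Secant plane lemma: let `C ⊂ ℙⁿ` be the rational normal curve of degree `n` and let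
`P ⊂ ℙⁿ` be a linear subspace of (projective) dimension `r`, i.e. a linear subspace
`P ⊂ ℂⁿ⁺¹` with `dim P = r + 1`.  If `(r+2)k ≥ (r+1)(n+1)`, then there is an effective
divisor `D = q₁ + ⋯ + q_k` of degree `k` on `C ≅ ℙ¹` with `P ⊆ span(D)`: every linear
functional `φ` whose restriction to the curve (a binary `n`-form) vanishes on `D`
(i.e. is divisible by the product of the linear factors of `D`) vanishes on `P`. -/
theorem secant_plane_lemma (n r k : ℕ) (P : Submodule ℂ (Fin (n + 1) → ℂ))
    (hP : Module.finrank ℂ P = r + 1)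
    (hk : (r + 2) * k ≥ (r + 1) * (n + 1)) :
    ∃ q : Fin k → (Fin 2 → ℂ), (∀ j, q j ≠ 0) ∧
      ∀ φ : Module.Dual ℂ (Fin (n + 1) → ℂ),
        (∏ j, chordFactor (q j)) ∣ restrictForm n φ → ∀ v ∈ P, φ v = 0 := by
  have hr : r ≤ n := by
    have h1 := Submodule.finrank_le P
    rw [hP, Module.finrank_fin_fun] at h1
    omega
  set w := Module.finBasisOfFinrankEq ℂ P hP with hw
  set T := Tmap n r k (fun s => ((w s : P) : Fin (n + 1) → ℂ)) with hT
  have hcod : Module.finrank ℂ (Fin (r + 1) → Fin (n - k + 1) → ℂ) = (r + 1) * (n - k + 1) := by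
    rw [Module.finrank_pi_fintype]
    simp [Module.finrank_fin_fun, Finset.sum_const, mul_comm]
  have hdom : Module.finrank ℂ (Fin (k + 1) → ℂ) = k + 1 := Module.finrank_fin_fun ℂ
  have hlt : (r + 1) * (n - k + 1) < k + 1 := by
    rcases le_or_gt k n with hkn | hkn
    · have e1 : n - k + 1 = n + 1 - k := by omega
      have e2 : (r + 1) * (n + 1 - k) + (r + 1) * k = (r + 1) * (n + 1) := by
        rw [← Nat.mul_add]; congr 1; omega
      have e3 : (r + 2) * k = (r + 1) * k + k := by ring
      rw [e1]
      linarith [hk, e2, e3]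
    · have e : n - k = 0 := by omega
      rw [e, Nat.mul_one]
      omega
  have hni : ¬ Function.Injective T := by
    intro hinj
    have := LinearMap.finrank_le_finrank_of_injective hinj
    rw [hdom, hcod] at this
    omega
  obtain ⟨a, haker, ha0⟩ :=
    (LinearMap.ker T).ne_bot_iff.mp (fun h => hni (LinearMap.ker_eq_bot.mp h))
  have hTa : ∀ (s : Fin (r + 1)) (j : Fin (n - k + 1)),
      Lf n ((w s : P) : Fin (n + 1) → ℂ)
        (Gp k a * (X 0 ^ (j : ℕ) * X 1 ^ (n - k - (j : ℕ)))) = 0 := by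
    intro s j
    exact congrFun (congrFun (LinearMap.mem_ker.mp haker) s) j
  set p : Polynomial ℂ := ∑ i : Fin (k + 1), Polynomial.C (a i) * Polynomial.X ^ (i : ℕ)
    with hpdef
  have pc : ∀ i : Fin (k + 1), a i = p.coeff (i : ℕ) := by
    intro i
    rw [hpdef, Polynomial.finset_sum_coeff, Finset.sum_eq_single i]
    · rw [Polynomial.coeff_C_mul, Polynomial.coeff_X_pow, if_pos rfl, mul_one]
    · intro b _ hb
      rw [Polynomial.coeff_C_mul, Polynomial.coeff_X_pow, if_neg (fun h => hb (Fin.ext h.symm)),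
        mul_zero]
    · simp
  have hp0 : p ≠ 0 := by
    intro h
    apply ha0
    funext i
    rw [pc i, h, Polynomial.coeff_zero]
    simp
  set m := p.natDegree with hmdef
  have hm : m ≤ k := by
    rw [hmdef, hpdef]
    apply Polynomial.natDegree_sum_le_of_forall_le
    intro i _
    apply le_trans (Polynomial.natDegree_C_mul_le _ _)
    rw [Polynomial.natDegree_X_pow]
    exact Nat.lt_succ_iff.mp i.isLt
  have hsplit : p.Splits := IsAlgClosed.splits p
  have hfac0 := Polynomial.Splits.eq_prod_roots hsplit
  set rlist := p.roots.toList with hrl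
  have hlen : rlist.length = m := by
    rw [hrl, Multiset.length_toList]
    exact Polynomial.splits_iff_card_roots.mp hsplit
  have hfac : p = Polynomial.C p.leadingCoeff *
      (rlist.map (fun z => Polynomial.X - Polynomial.C z)).prod := by
    conv_lhs => rw [hfac0]
    rw [hrl]
    congr 1
    conv_lhs => rw [← Multiset.coe_toList p.roots]
    rw [Multiset.map_coe, Multiset.prod_coe]
  set qlist : List (Fin 2 → ℂ) :=
    rlist.map (fun z => ![z, 1]) ++ List.replicate (k - m) ![1, 0] with hql
  have hqlen : qlist.length = k := by
    rw [hql]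
    simp [hlen]
    omega
  have hqne : ∀ x ∈ qlist, x ≠ (0 : Fin 2 → ℂ) := by
    rw [hql]
    intro x hx
    rcases List.mem_append.mp hx with hmem | hmem
    · obtain ⟨z, _, rfl⟩ := List.mem_map.mp hmem
      intro h
      have := congrFun h 1
      simp at this
    · rw [List.eq_of_mem_replicate hmem]
      intro h
      have := congrFun h 0
      simp at this
  refine ⟨fun j => qlist.get (Fin.cast hqlen.symm j), ?_, ?_⟩
  · intro j
    apply hqne
    exact List.get_mem _ _
  · intro φ hdvd v hv
    have hQfac : (∏ j : Fin k, chordFactor (qlist.get (Fin.cast hqlen.symm j))) =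
        (rlist.map (fun z => chordFactor ![z, 1])).prod * (chordFactor ![1, 0]) ^ (k - m) := by
      have h1 : (∏ j : Fin k, chordFactor (qlist.get (Fin.cast hqlen.symm j)))
          = (qlist.map chordFactor).prod := by
        rw [← Fin.prod_univ_fun_getElem qlist chordFactor]
        exact Fintype.prod_equiv (finCongr hqlen.symm) _ _ (fun j => rfl)
      rw [h1, hql, List.map_append, List.prod_append, List.map_map, List.map_replicate,
        List.prod_replicate]
      rfl
    have hkey := key_identity k m hm p a hmdef.symm hpdef pc rlist hlen hfac
    set c' := (-1 : ℂ) ^ (k - m) * p.leadingCoeff with hc'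
    have hc0 : c' ≠ 0 :=
      mul_ne_zero (pow_ne_zero _ (by norm_num)) (Polynomial.leadingCoeff_ne_zero.mpr hp0)
    have hGQ : Gp k a = c' • (∏ j : Fin k, chordFactor (qlist.get (Fin.cast hqlen.symm j))) := by
      rw [hQfac]
      exact hkey
    obtain ⟨h, hF⟩ := hdvd
    have hmain : ∀ s : Fin (r + 1),
        Lf n ((w s : P) : Fin (n + 1) → ℂ) (restrictForm n φ) = 0 := by
      intro s
      rw [hF]
      rw [show (h : MvPolynomial (Fin 2) ℂ)
        = ∑ μ ∈ h.support, monomial μ (MvPolynomial.coeff μ h) from h.as_sum]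
      rw [Finset.mul_sum, Lf_sum]
      refine Finset.sum_eq_zero fun μ _ => ?_
      by_cases hdeg2 : k + (μ 0 + μ 1) = n
      · have hμ1 : μ 1 = n - k - μ 0 := by omega
        have hμ : (monomial μ (MvPolynomial.coeff μ h) : MvPolynomial (Fin 2) ℂ)
            = MvPolynomial.coeff μ h • (X 0 ^ (μ 0) * X 1 ^ (n - k - μ 0)) := by
          rw [X_pow_mul_X_pow, MvPolynomial.smul_monomial, smul_eq_mul, mul_one]
          congr 1
          conv_lhs => rw [eq_mono2 μ]
          rw [hμ1]
        rw [hμ, mul_smul_comm, Lf_smul]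
        have hker := hTa s ⟨μ 0, by omega⟩
        rw [hGQ, smul_mul_assoc, Lf_smul] at hker
        have hz := (mul_eq_zero.mp hker).resolve_left hc0
        rw [hz, mul_zero]
      · exact Lf_homog n _
          ((prod_chord_homog k _).mul
            (MvPolynomial.isHomogeneous_monomial _ (degree_fin2 μ))) hdeg2
    have h1 : ((∑ s, w.repr ⟨v, hv⟩ s • w s : P) : Fin (n + 1) → ℂ)
        = ∑ s, w.repr ⟨v, hv⟩ s • ((w s : P) : Fin (n + 1) → ℂ) := by
      rw [Submodule.coe_sum]; rfl
    have hveq : v = ∑ s, w.repr ⟨v, hv⟩ s • ((w s : P) : Fin (n + 1) → ℂ) := by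
      rw [← h1, w.sum_repr]
    rw [← Lf_restrict n φ v]
    conv_lhs => rw [hveq]
    rw [Lf_sum_smul]
    exact Finset.sum_eq_zero fun s _ => by rw [hmain s, mul_zero]
end
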